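/- Define the shock curves c_0(t) := -∞, c_{n+1}(t) := +∞ and, for k = 1,...,n, c_k(t) := c_k + (1-ρ_{k-1}-ρ_k) t for 0 < t < t* and c_k(t) := r* + (1-ρ_0-ρ_n)(t-t*) for t ≥ t*. Define u : ℝ × (0,∞) → ℝ by u(r,t) := Σ_{k=0}^n ρ_k 1{c_k(t) ≤ r < c_{k+1}(t)}. Then u is a weak solution of the Burgers equation ∂_t u + ∂_r (u(1-u)) = 0 on ℝ × (0,∞): for every C^∞ function φ : ℝ × ℝ → ℝ whose support is compact and contained in ℝ × (0,∞), ∫_0^∞ ∫_ℝ [ u(r,t) ∂_t φ(r,t) + u(r,t)(1-u(r,t)) ∂_r φ(r,t) ] dr dt = 0. -/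

import Mathlib

open MeasureTheory Set Filter Topology

lemma sect_cs {E : Type*} [Zero E] [TopologicalSpace E] {f : ℝ × ℝ → E}
    (hf : HasCompactSupport f) (t : ℝ) :
    HasCompactSupport (fun s : ℝ => f (s, t)) := by
  have h : Topology.IsClosedEmbedding (fun s : ℝ => (s, t)) :=
    (Isometry.of_dist_eq (fun a b => by simp [Prod.dist_eq, dist_nonneg])).isClosedEmbedding
  exact hf.comp_isClosedEmbedding h

-- partial derivative facts
lemma hasDerivAt_fst {φ : ℝ × ℝ → ℝ} (hφ : ContDiff ℝ (⊤ : ℕ∞) φ) (s t : ℝ) :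
    HasDerivAt (fun x => φ (x, t)) (fderiv ℝ φ (s, t) (1, 0)) s := by
  have h1 : HasFDerivAt φ (fderiv ℝ φ (s, t)) (s, t) :=
    (hφ.differentiable (by simp) (s, t)).hasFDerivAt
  have h2 : HasDerivAt (fun x : ℝ => (x, t)) ((1 : ℝ), (0 : ℝ)) s := by
    simpa using (hasDerivAt_id s).prodMk (hasDerivAt_const s t)
  exact h1.comp_hasDerivAt s h2

lemma hasDerivAt_snd {φ : ℝ × ℝ → ℝ} (hφ : ContDiff ℝ (⊤ : ℕ∞) φ) (s t : ℝ) :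
    HasDerivAt (fun x => φ (s, x)) (fderiv ℝ φ (s, t) (0, 1)) t := by
  have h1 : HasFDerivAt φ (fderiv ℝ φ (s, t)) (s, t) :=
    (hφ.differentiable (by simp) (s, t)).hasFDerivAt
  have h2 : HasDerivAt (fun x : ℝ => (s, x)) ((0 : ℝ), (1 : ℝ)) t := by
    simpa using (hasDerivAt_const t s).prodMk (hasDerivAt_id t)
  exact h1.comp_hasDerivAt t h2

lemma cont_fderiv_apply {φ : ℝ × ℝ → ℝ} (hφ : ContDiff ℝ (⊤ : ℕ∞) φ) (v : ℝ × ℝ) :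
    Continuous (fun p => fderiv ℝ φ p v) := by
  have h : Continuous (fderiv ℝ φ) := (hφ.fderiv_right (m := (⊤ : ℕ∞)) (by simp)).continuous
  exact (ContinuousLinearMap.apply ℝ ℝ v).continuous.comp h

lemma cs_fderiv_apply {φ : ℝ × ℝ → ℝ} (hφc : HasCompactSupport φ) (v : ℝ × ℝ) :
    HasCompactSupport (fun p => fderiv ℝ φ p v) := by
  have := (hφc.fderiv ℝ)
  exact this.comp_left (g := fun A : ℝ × ℝ →L[ℝ] ℝ => A v) rfl

-- FTC in first variable over Ioi
lemma ftc_fst {φ : ℝ × ℝ → ℝ} (hφ : ContDiff ℝ (⊤ : ℕ∞) φ) (hφc : HasCompactSupport φ)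
    (b t : ℝ) : ∫ s in Ioi b, fderiv ℝ φ (s, t) (1, 0) = -φ (b, t) := by
  have h1 : ContDiff ℝ 1 (fun s : ℝ => φ (s, t)) :=
    (hφ.of_le (by simp)).comp (contDiff_id.prodMk contDiff_const)
  have h2 : HasCompactSupport (fun s : ℝ => φ (s, t)) := sect_cs hφc t
  have h3 := h2.integral_Ioi_deriv_eq h1 b
  rw [← h3]
  apply setIntegral_congr_fun measurableSet_Ioi
  intro s _
  exact ((hasDerivAt_fst hφ s t).deriv).symm

lemma exists_bound {F : ℝ × ℝ → ℝ} (hF : Continuous F) (hFc : HasCompactSupport F) :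
    ∃ C M : ℝ, 0 ≤ C ∧ 0 < M ∧ (∀ p : ℝ × ℝ, |F p| ≤ C) ∧
      (∀ p : ℝ × ℝ, M < |p.1| ∨ M < |p.2| → F p = 0) := by
  obtain ⟨x, hx⟩ := (hF.abs).exists_forall_ge_of_hasCompactSupport hFc.abs
  obtain ⟨r, hr⟩ := hFc.isBounded.subset_closedBall 0
  refine ⟨|F x|, max r 1, abs_nonneg _, lt_of_lt_of_le one_pos (le_max_right _ _),
    fun p => hx p, fun p hp => ?_⟩
  have hn : ¬ p ∈ tsupport F := by
    intro hmem
    have := hr hmem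
    rw [Metric.mem_closedBall, dist_zero_right, Prod.norm_def] at this
    rcases hp with h | h
    · exact absurd (le_trans (le_max_left _ _) this)
        (not_le.2 (lt_of_le_of_lt (le_max_left r 1) (by simpa using h)))
    · exact absurd (le_trans (le_max_right _ _) this)
        (not_le.2 (lt_of_le_of_lt (le_max_left r 1) (by simpa using h)))
  exact image_eq_zero_of_notMem_tsupport hn

lemma param_hasDerivAt {φ : ℝ × ℝ → ℝ} (hφ : ContDiff ℝ (⊤ : ℕ∞) φ) (hφc : HasCompactSupport φ)
    (S : Set ℝ) (t : ℝ) :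
    HasDerivAt (fun τ => ∫ s in S, φ (s, τ))
      (∫ s in S, fderiv ℝ φ (s, t) (0, 1)) t := by
  have hG : Continuous (fun p : ℝ × ℝ => fderiv ℝ φ p (0, 1)) := by
    have h : Continuous (fderiv ℝ φ) := (hφ.fderiv_right (m := (⊤ : ℕ∞)) (by simp)).continuous
    exact (ContinuousLinearMap.apply ℝ ℝ ((0:ℝ), (1:ℝ))).continuous.comp h
  have hGc : HasCompactSupport (fun p : ℝ × ℝ => fderiv ℝ φ p (0, 1)) := by
    exact (hφc.fderiv ℝ).comp_left (g := fun A : ℝ × ℝ →L[ℝ] ℝ => A (0, 1)) rfl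
  obtain ⟨C, M, hC, hM, hbd, hvan⟩ := exists_bound hG hGc
  have key := hasDerivAt_integral_of_dominated_loc_of_deriv_le
    (μ := volume.restrict S) (x₀ := t) (s := Metric.ball t 1) (Metric.ball_mem_nhds t one_pos)
    (F := fun τ s => φ (s, τ)) (F' := fun τ s => fderiv ℝ φ (s, τ) (0, 1))
    (bound := Set.indicator (Icc (-M) M) (fun _ => C))
    ?_ ?_ ?_ ?_ ?_ ?_
  · exact key.2
  · filter_upwards with τ
    exact (hφ.continuous.comp (continuous_id.prodMk continuous_const)).aestronglyMeasurable
  · exact ((hφ.continuous.comp (continuous_id.prodMk continuous_const)).integrable_of_hasCompactSupport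
      ((by exact hφc : HasCompactSupport φ).comp_isClosedEmbedding
        ((Isometry.of_dist_eq (fun a b => by simp [Prod.dist_eq, dist_nonneg])).isClosedEmbedding
          (f := fun s : ℝ => (s, t))))).restrict
  · exact (hG.comp (continuous_id.prodMk continuous_const)).aestronglyMeasurable
  · filter_upwards with s
    intro x _
    by_cases hs : s ∈ Icc (-M) M
    · rw [Set.indicator_of_mem hs]
      exact (le_trans (le_refl _) (hbd (s, x)))
    · rw [Set.indicator_of_notMem hs]
      have : M < |s| := by
        rcases not_and_or.1 hs with h | h
        · push_neg at h
          calc M < -s := by linarith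
          _ ≤ |s| := neg_le_abs s
        · push_neg at h
          exact lt_of_lt_of_le h (le_abs_self s)
      rw [hvan (s, x) (Or.inl this)]
      simp
  · apply Integrable.restrict
    rw [integrable_indicator_iff measurableSet_Icc]
    exact integrableOn_const (C := C) measure_Icc_lt_top.ne
  · filter_upwards with s
    intro x _
    exact hasDerivAt_snd hφ s x


lemma cont_param_moving {F : ℝ × ℝ → ℝ} (hF : Continuous F) (hFc : HasCompactSupport F)
    {γ : ℝ → ℝ} (hγ : Continuous γ) (S : Set ℝ) :
    Continuous (fun t => ∫ s in S, F (s + γ t, t)) := by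
  obtain ⟨C, M, hC, hM, hbd, hvan⟩ := exists_bound hF hFc
  obtain ⟨M2, hM2⟩ := isCompact_Icc.exists_bound_of_continuousOn
    (s := Icc (-M) M) hγ.continuousOn
  apply continuous_of_dominated (bound := Set.indicator (Icc (-(M + M2)) (M + M2)) (fun _ => C))
  · intro t
    exact (hF.comp ((continuous_id.add continuous_const).prodMk continuous_const)).aestronglyMeasurable
  · intro t
    filter_upwards with s
    by_cases hs : s ∈ Icc (-(M + M2)) (M + M2)
    · rw [Set.indicator_of_mem hs]
      exact hbd _
    · rw [Set.indicator_of_notMem hs]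
      have habs : M + M2 < |s| := by
        rcases not_and_or.1 hs with h | h
        · push_neg at h
          calc M + M2 < -s := by linarith
          _ ≤ |s| := neg_le_abs s
        · push_neg at h
          exact lt_of_lt_of_le h (le_abs_self s)
      by_cases ht : M < |t|
      · rw [hvan _ (Or.inr ht)]; simp
      · push_neg at ht
        have htmem : t ∈ Icc (-M) M := abs_le.1 ht
        have hγt : |γ t| ≤ M2 := by simpa [Real.norm_eq_abs] using hM2 t htmem
        have : M < |s + γ t| := by
          have := abs_add_le (s + γ t) (-(γ t))
          simp only [add_neg_cancel_right] at this
          have h2 : |s| - |γ t| ≤ |s + γ t| := by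
            simpa [abs_neg] using sub_le_iff_le_add.2 this
          linarith
        rw [hvan _ (Or.inl this)]; simp
  · apply Integrable.restrict
    rw [integrable_indicator_iff measurableSet_Icc]
    exact integrableOn_const (C := C) measure_Icc_lt_top.ne
  · filter_upwards with s
    exact hF.comp ((continuous_const.add hγ).prodMk continuous_id)

lemma cs_param_moving {F : ℝ × ℝ → ℝ} (hF : Continuous F) (hFc : HasCompactSupport F)
    {γ : ℝ → ℝ} (hγ : Continuous γ) (S : Set ℝ) :
    HasCompactSupport (fun t => ∫ s in S, F (s + γ t, t)) := by
  obtain ⟨C, M, hC, hM, hbd, hvan⟩ := exists_bound hF hFc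
  apply HasCompactSupport.intro (isCompact_Icc (a := -M) (b := M))
  intro t ht
  have htabs : M < |t| := by
    simp only [mem_Icc, not_and_or, not_le] at ht
    rcases ht with h | h
    · calc M < -t := by linarith
      _ ≤ |t| := neg_le_abs t
    · exact lt_of_lt_of_le h (le_abs_self t)
  have : (fun s => F (s + γ t, t)) = fun _ => (0 : ℝ) := by
    funext s; exact hvan _ (Or.inr htabs)
  simp [this]

lemma cov_Ici (g : ℝ → ℝ) (c : ℝ) :
    ∫ r in Ici c, g r = ∫ s in Ici (0 : ℝ), g (s + c) := by
  rw [← integral_indicator measurableSet_Ici, ← integral_indicator measurableSet_Ici]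
  rw [← integral_add_right_eq_self (fun x => (Ici c).indicator g x) c]
  congr 1
  funext s
  simp only [Set.indicator_apply, mem_Ici]
  by_cases h : (0 : ℝ) ≤ s
  · rw [if_pos (by linarith : c ≤ s + c), if_pos h]
  · rw [if_neg (by intro hh; exact h (by linarith)), if_neg h]


noncomputable section

def shiftMap (α m : ℝ) : ℝ × ℝ → ℝ × ℝ := fun p => (p.1 + m * p.2 + α, p.2)

def shiftHomeo (α m : ℝ) : (ℝ × ℝ) ≃ₜ (ℝ × ℝ) where
  toFun := shiftMap α m
  invFun := fun p => (p.1 - m * p.2 - α, p.2)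
  left_inv := fun p => by simp [shiftMap]; ring
  right_inv := fun p => by simp [shiftMap]; ring
  continuous_toFun := by
    exact ((continuous_fst.add (continuous_const.mul continuous_snd)).add
      continuous_const).prodMk continuous_snd
  continuous_invFun := by
    exact ((continuous_fst.sub (continuous_const.mul continuous_snd)).sub
      continuous_const).prodMk continuous_snd

lemma shiftMap_contDiff (α m : ℝ) : ContDiff ℝ (⊤ : ℕ∞) (shiftMap α m) := by
  exact ((contDiff_fst.add (contDiff_const.mul contDiff_snd)).add contDiff_const).prodMk contDiff_snd

def shiftCLM (m : ℝ) : (ℝ × ℝ) →L[ℝ] (ℝ × ℝ) :=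
  ((ContinuousLinearMap.fst ℝ ℝ ℝ) + m • (ContinuousLinearMap.snd ℝ ℝ ℝ)).prod
    (ContinuousLinearMap.snd ℝ ℝ ℝ)

lemma hasFDerivAt_shiftMap (α m : ℝ) (p : ℝ × ℝ) :
    HasFDerivAt (shiftMap α m) (shiftCLM m) p := by
  have h1 : HasFDerivAt (fun p : ℝ × ℝ => p.1 + m * p.2 + α)
      ((ContinuousLinearMap.fst ℝ ℝ ℝ) + m • (ContinuousLinearMap.snd ℝ ℝ ℝ)) p :=
    ((hasFDerivAt_fst).add ((hasFDerivAt_snd).const_mul m)).add_const α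
  exact h1.prodMk (hasFDerivAt_snd)

lemma fderiv_shift_comp {φ : ℝ × ℝ → ℝ} (hφ : ContDiff ℝ (⊤ : ℕ∞) φ) (α m : ℝ) (p : ℝ × ℝ) (v : ℝ × ℝ) :
    fderiv ℝ (fun q => φ (shiftMap α m q)) p v = fderiv ℝ φ (shiftMap α m p) (shiftCLM m v) := by
  have h := ((hφ.differentiable (by simp) (shiftMap α m p)).hasFDerivAt.comp p
    (hasFDerivAt_shiftMap α m p)).fderiv
  have : fderiv ℝ (φ ∘ shiftMap α m) p = (fderiv ℝ φ (shiftMap α m p)).comp (shiftCLM m) := h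
  calc fderiv ℝ (fun q => φ (shiftMap α m q)) p v
      = ((fderiv ℝ φ (shiftMap α m p)).comp (shiftCLM m)) v := by rw [← this]; rfl
    _ = fderiv ℝ φ (shiftMap α m p) (shiftCLM m v) := rfl

lemma shiftCLM_apply (m : ℝ) (v : ℝ × ℝ) : shiftCLM m v = (v.1 + m * v.2, v.2) := by
  simp [shiftCLM, ContinuousLinearMap.prod_apply]

lemma fderiv_shift_apply1 {φ : ℝ × ℝ → ℝ} (hφ : ContDiff ℝ (⊤ : ℕ∞) φ) (α m : ℝ) (p : ℝ × ℝ) :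
    fderiv ℝ (fun q => φ (shiftMap α m q)) p (1, 0) = fderiv ℝ φ (shiftMap α m p) (1, 0) := by
  rw [fderiv_shift_comp hφ, shiftCLM_apply]; norm_num

lemma fderiv_shift_apply2 {φ : ℝ × ℝ → ℝ} (hφ : ContDiff ℝ (⊤ : ℕ∞) φ) (α m : ℝ) (p : ℝ × ℝ) :
    fderiv ℝ (fun q => φ (shiftMap α m q)) p (0, 1)
      = fderiv ℝ φ (shiftMap α m p) (0, 1) + m * fderiv ℝ φ (shiftMap α m p) (1, 0) := by
  rw [fderiv_shift_comp hφ, shiftCLM_apply]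
  have : ((0 : ℝ) + m * 1, (1 : ℝ)) = m • ((1 : ℝ), (0 : ℝ)) + ((0 : ℝ), (1 : ℝ)) := by
    simp [Prod.ext_iff]
  rw [this, map_add, (fderiv ℝ φ (shiftMap α m p)).map_smul]
  simp [smul_eq_mul]; ring

end

lemma sect2_cs {E : Type*} [Zero E] [TopologicalSpace E] {f : ℝ × ℝ → E}
    (hf : HasCompactSupport f) (s0 : ℝ) :
    HasCompactSupport (fun t : ℝ => f (s0, t)) := by
  have h : Topology.IsClosedEmbedding (fun t : ℝ => (s0, t)) :=
    (Isometry.of_dist_eq (fun a b => by simp [Prod.dist_eq, dist_nonneg])).isClosedEmbedding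
  exact hf.comp_isClosedEmbedding h

lemma psi_contDiff {φ : ℝ × ℝ → ℝ} (hφ : ContDiff ℝ (⊤ : ℕ∞) φ) (α m : ℝ) :
    ContDiff ℝ (⊤ : ℕ∞) (fun q => φ (shiftMap α m q)) :=
  hφ.comp (shiftMap_contDiff α m)

lemma psi_cs {φ : ℝ × ℝ → ℝ} (hφc : HasCompactSupport φ) (α m : ℝ) :
    HasCompactSupport (fun q => φ (shiftMap α m q)) :=
  hφc.comp_homeomorph (shiftHomeo α m)

lemma integrable_fderiv_sect {φ : ℝ × ℝ → ℝ} (hφ : ContDiff ℝ (⊤ : ℕ∞) φ)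
    (hφc : HasCompactSupport φ) (v : ℝ × ℝ) (t : ℝ) (S : Set ℝ) :
    IntegrableOn (fun s => fderiv ℝ φ (s, t) v) S := by
  apply Integrable.integrableOn
  exact ((cont_fderiv_apply hφ v).comp
    (continuous_id.prodMk continuous_const)).integrable_of_hasCompactSupport
    (sect_cs (cs_fderiv_apply hφc v) t)

lemma seg_inner {φ : ℝ × ℝ → ℝ} (hφ : ContDiff ℝ (⊤ : ℕ∞) φ) (hφc : HasCompactSupport φ)
    (α m a b t : ℝ) :
    ∫ r in Ici (α + m * t),
        (a * fderiv ℝ φ (r, t) (0, 1) + b * fderiv ℝ φ (r, t) (1, 0))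
      = a * (∫ s in Ici (0 : ℝ), fderiv ℝ (fun q => φ (shiftMap α m q)) (s, t) (0, 1))
        - (b - a * m) * φ (shiftMap α m (0, t)) := by
  have hψ : ContDiff ℝ (⊤ : ℕ∞) (fun q => φ (shiftMap α m q)) := psi_contDiff hφ α m
  have hψc : HasCompactSupport (fun q => φ (shiftMap α m q)) := psi_cs hφc α m
  rw [cov_Ici]
  have heq : ∀ s ∈ Ici (0:ℝ),
      (fun r => a * fderiv ℝ φ (r, t) (0, 1) + b * fderiv ℝ φ (r, t) (1, 0)) (s + (α + m * t))
      = a * fderiv ℝ (fun q => φ (shiftMap α m q)) (s, t) (0, 1)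
        + (b - a * m) * fderiv ℝ (fun q => φ (shiftMap α m q)) (s, t) (1, 0) := by
    intro s _
    rw [fderiv_shift_apply2 hφ, fderiv_shift_apply1 hφ]
    have harg : shiftMap α m (s, t) = (s + (α + m * t), t) := by
      simp only [shiftMap, Prod.mk.injEq]
      exact ⟨by ring, trivial⟩
    rw [harg]; ring
  rw [setIntegral_congr_fun measurableSet_Ici heq]
  rw [integral_add ((integrable_fderiv_sect hψ hψc (0,1) t (Ici 0)).const_mul a)
      ((integrable_fderiv_sect hψ hψc (1,0) t (Ici 0)).const_mul (b - a*m))]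
  have hftc : (∫ s in Ici (0:ℝ), fderiv ℝ (fun q => φ (shiftMap α m q)) (s, t) (1, 0))
      = -φ (shiftMap α m (0, t)) := by
    rw [integral_Ici_eq_integral_Ioi]
    exact ftc_fst hψ hψc 0 t
  rw [integral_const_mul, integral_const_mul, hftc]
  ring

lemma dPhi_cont {ψ : ℝ × ℝ → ℝ} (hψ : ContDiff ℝ (⊤ : ℕ∞) ψ) (hψc : HasCompactSupport ψ)
    (S : Set ℝ) : Continuous (fun t => ∫ s in S, fderiv ℝ ψ (s, t) (0, 1)) := by
  have h := cont_param_moving (cont_fderiv_apply hψ (0,1)) (cs_fderiv_apply hψc (0,1))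
    (γ := fun _ => (0:ℝ)) continuous_const S
  simpa only [add_zero] using h

lemma dPhi_cs {ψ : ℝ × ℝ → ℝ} (hψ : ContDiff ℝ (⊤ : ℕ∞) ψ) (hψc : HasCompactSupport ψ)
    (S : Set ℝ) : HasCompactSupport (fun t => ∫ s in S, fderiv ℝ ψ (s, t) (0, 1)) := by
  have h := cs_param_moving (cont_fderiv_apply hψ (0,1)) (cs_fderiv_apply hψc (0,1))
    (γ := fun _ => (0:ℝ)) continuous_const S
  simpa only [add_zero] using h

lemma Phi_tendsto {ψ : ℝ × ℝ → ℝ} (hψ : ContDiff ℝ (⊤ : ℕ∞) ψ) (hψc : HasCompactSupport ψ)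
    (S : Set ℝ) : Tendsto (fun τ => ∫ s in S, ψ (s, τ)) atTop (𝓝 (0:ℝ)) := by
  obtain ⟨C, M, _, hM, _, hvan⟩ := exists_bound hψ.continuous hψc
  apply Tendsto.congr' _ (tendsto_const_nhds (α := ℝ) (x := (0:ℝ)))
  filter_upwards [eventually_gt_atTop M] with τ hτ
  have : (fun s => ψ (s, τ)) = fun _ => (0:ℝ) := by
    funext s
    exact hvan (s, τ) (Or.inr (lt_of_lt_of_le hτ (le_abs_self τ)))
  rw [this]
  simp

lemma seg_Ioc {φ : ℝ × ℝ → ℝ} (hφ : ContDiff ℝ (⊤ : ℕ∞) φ) (hφc : HasCompactSupport φ)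
    (α m a b t1 t2 : ℝ) (h12 : t1 ≤ t2) :
    ∫ t in Ioc t1 t2, (∫ r in Ici (α + m * t),
        (a * fderiv ℝ φ (r, t) (0, 1) + b * fderiv ℝ φ (r, t) (1, 0)))
    = a * ((∫ s in Ici (0:ℝ), φ (shiftMap α m (s, t2)))
            - (∫ s in Ici (0:ℝ), φ (shiftMap α m (s, t1))))
      - (b - a * m) * ∫ t in Ioc t1 t2, φ (shiftMap α m (0, t)) := by
  have hψ : ContDiff ℝ (⊤ : ℕ∞) (fun q => φ (shiftMap α m q)) := psi_contDiff hφ α m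
  have hψc : HasCompactSupport (fun q => φ (shiftMap α m q)) := psi_cs hφc α m
  have hcontd := dPhi_cont hψ hψc (Ici 0)
  have hcsd := dPhi_cs hψ hψc (Ici 0)
  have h1 : EqOn (fun t => ∫ r in Ici (α + m * t),
        (a * fderiv ℝ φ (r, t) (0, 1) + b * fderiv ℝ φ (r, t) (1, 0)))
      (fun t => a * (∫ s in Ici (0:ℝ), fderiv ℝ (fun q => φ (shiftMap α m q)) (s, t) (0, 1))
        - (b - a * m) * φ (shiftMap α m (0, t))) (Ioc t1 t2) :=
    fun t _ => seg_inner hφ hφc α m a b t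
  rw [setIntegral_congr_fun measurableSet_Ioc h1]
  have hi1 : Integrable (fun t => a * (∫ s in Ici (0:ℝ),
      fderiv ℝ (fun q => φ (shiftMap α m q)) (s, t) (0, 1))) :=
    ((continuous_const.mul hcontd).integrable_of_hasCompactSupport hcsd.mul_left)
  have hi2 : Integrable (fun t => (b - a * m) * φ (shiftMap α m (0, t))) :=
    ((continuous_const.mul (hψ.continuous.comp (continuous_const.prodMk
      continuous_id))).integrable_of_hasCompactSupport (sect2_cs hψc 0).mul_left)
  rw [integral_sub hi1.integrableOn hi2.integrableOn]
  rw [integral_const_mul, integral_const_mul]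
  have hint : ∫ t in Ioc t1 t2, (∫ s in Ici (0:ℝ),
      fderiv ℝ (fun q => φ (shiftMap α m q)) (s, t) (0, 1))
      = (∫ s in Ici (0:ℝ), φ (shiftMap α m (s, t2)))
        - (∫ s in Ici (0:ℝ), φ (shiftMap α m (s, t1))) := by
    rw [← intervalIntegral.integral_of_le h12]
    exact intervalIntegral.integral_eq_sub_of_hasDerivAt
      (fun x _ => param_hasDerivAt hψ hψc (Ici 0) x) (hcontd.intervalIntegrable t1 t2)
  rw [hint]

lemma seg_Ioi {φ : ℝ × ℝ → ℝ} (hφ : ContDiff ℝ (⊤ : ℕ∞) φ) (hφc : HasCompactSupport φ)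
    (α m a b t1 : ℝ) :
    ∫ t in Ioi t1, (∫ r in Ici (α + m * t),
        (a * fderiv ℝ φ (r, t) (0, 1) + b * fderiv ℝ φ (r, t) (1, 0)))
    = a * (0 - (∫ s in Ici (0:ℝ), φ (shiftMap α m (s, t1))))
      - (b - a * m) * ∫ t in Ioi t1, φ (shiftMap α m (0, t)) := by
  have hψ : ContDiff ℝ (⊤ : ℕ∞) (fun q => φ (shiftMap α m q)) := psi_contDiff hφ α m
  have hψc : HasCompactSupport (fun q => φ (shiftMap α m q)) := psi_cs hφc α m
  have hcontd := dPhi_cont hψ hψc (Ici 0)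
  have hcsd := dPhi_cs hψ hψc (Ici 0)
  have h1 : EqOn (fun t => ∫ r in Ici (α + m * t),
        (a * fderiv ℝ φ (r, t) (0, 1) + b * fderiv ℝ φ (r, t) (1, 0)))
      (fun t => a * (∫ s in Ici (0:ℝ), fderiv ℝ (fun q => φ (shiftMap α m q)) (s, t) (0, 1))
        - (b - a * m) * φ (shiftMap α m (0, t))) (Ioi t1) :=
    fun t _ => seg_inner hφ hφc α m a b t
  rw [setIntegral_congr_fun measurableSet_Ioi h1]
  have hi1 : Integrable (fun t => a * (∫ s in Ici (0:ℝ),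
      fderiv ℝ (fun q => φ (shiftMap α m q)) (s, t) (0, 1))) :=
    ((continuous_const.mul hcontd).integrable_of_hasCompactSupport hcsd.mul_left)
  have hi2 : Integrable (fun t => (b - a * m) * φ (shiftMap α m (0, t))) :=
    ((continuous_const.mul (hψ.continuous.comp (continuous_const.prodMk
      continuous_id))).integrable_of_hasCompactSupport (sect2_cs hψc 0).mul_left)
  rw [integral_sub hi1.integrableOn hi2.integrableOn]
  rw [integral_const_mul, integral_const_mul]
  have hint : ∫ t in Ioi t1, (∫ s in Ici (0:ℝ),
      fderiv ℝ (fun q => φ (shiftMap α m q)) (s, t) (0, 1))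
      = 0 - (∫ s in Ici (0:ℝ), φ (shiftMap α m (s, t1))) := by
    exact integral_Ioi_of_hasDerivAt_of_tendsto'
      (fun x _ => param_hasDerivAt hψ hψc (Ici 0) x)
      (hcontd.integrable_of_hasCompactSupport hcsd).integrableOn
      (Phi_tendsto hψ hψc (Ici 0))
  rw [hint]

lemma ftc_fst_full {φ : ℝ × ℝ → ℝ} (hφ : ContDiff ℝ (⊤ : ℕ∞) φ) (hφc : HasCompactSupport φ)
    (t : ℝ) : ∫ r : ℝ, fderiv ℝ φ (r, t) (1, 0) = 0 := by
  obtain ⟨C, M, _, hM, _, hvanφ⟩ := exists_bound hφ.continuous hφc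
  obtain ⟨C2, M2, _, hM2, _, hvanD⟩ :=
    exists_bound (cont_fderiv_apply hφ (1,0)) (cs_fderiv_apply hφc (1,0))
  have h0 : ∀ r ∉ Ioi (-(max M M2 + 1)), fderiv ℝ φ (r, t) (1, 0) = 0 := by
    intro r hr
    simp only [mem_Ioi, not_lt] at hr
    apply hvanD (r, t)
    left
    have h1 : M2 < -r := by
      have := le_max_right M M2
      nlinarith [le_max_right M M2]
    calc M2 < -r := h1
      _ ≤ |r| := neg_le_abs r
  rw [← setIntegral_eq_integral_of_forall_compl_eq_zero h0, ftc_fst hφ hφc _ t]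
  have hz : φ (-(max M M2 + 1), t) = 0 := by
    apply hvanφ
    left
    have h1 : M < max M M2 + 1 := by nlinarith [le_max_left M M2]
    calc M < max M M2 + 1 := h1
      _ = |(-(max M M2 + 1))| := by rw [abs_neg, abs_of_pos (by nlinarith [le_max_left M M2])]
      _ = |((-(max M M2 + 1), t) : ℝ × ℝ).1| := rfl
  rw [hz]
  simp

lemma cont_full_param {F : ℝ × ℝ → ℝ} (hF : Continuous F) (hFc : HasCompactSupport F) :
    Continuous (fun t => ∫ r : ℝ, F (r, t)) := by
  have h := cont_param_moving hF hFc (γ := fun _ => (0:ℝ)) continuous_const univ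
  simpa only [add_zero, Measure.restrict_univ] using h

lemma cs_full_param {F : ℝ × ℝ → ℝ} (hF : Continuous F) (hFc : HasCompactSupport F) :
    HasCompactSupport (fun t => ∫ r : ℝ, F (r, t)) := by
  have h := cs_param_moving hF hFc (γ := fun _ => (0:ℝ)) continuous_const univ
  simpa only [add_zero, Measure.restrict_univ] using h

lemma outer_full {φ : ℝ × ℝ → ℝ} (hφ : ContDiff ℝ (⊤ : ℕ∞) φ) (hφc : HasCompactSupport φ)
    (hsupp : tsupport φ ⊆ {p : ℝ × ℝ | 0 < p.2}) :
    ∫ t in Ioi (0:ℝ), (∫ r : ℝ, fderiv ℝ φ (r, t) (0, 1)) = 0 := by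
  have hderiv : ∀ x ∈ Ici (0:ℝ), HasDerivAt (fun τ => ∫ r : ℝ, φ (r, τ))
      (∫ r : ℝ, fderiv ℝ φ (r, x) (0, 1)) x := by
    intro x _
    have h := param_hasDerivAt hφ hφc univ x
    simpa only [Measure.restrict_univ] using h
  have hint : IntegrableOn (fun x => ∫ r : ℝ, fderiv ℝ φ (r, x) (0, 1)) (Ioi (0:ℝ)) :=
    ((cont_full_param (cont_fderiv_apply hφ (0,1)) (cs_fderiv_apply hφc (0,1))).integrable_of_hasCompactSupport
      (cs_full_param (cont_fderiv_apply hφ (0,1)) (cs_fderiv_apply hφc (0,1)))).integrableOn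
  have htend : Tendsto (fun τ => ∫ r : ℝ, φ (r, τ)) atTop (𝓝 (0:ℝ)) := by
    have h := Phi_tendsto hφ hφc univ
    simpa only [Measure.restrict_univ] using h
  rw [integral_Ioi_of_hasDerivAt_of_tendsto' hderiv hint htend]
  have : (fun r : ℝ => φ (r, 0)) = fun _ => (0:ℝ) := by
    funext r
    apply image_eq_zero_of_notMem_tsupport
    intro hmem
    simpa using hsupp hmem
  rw [this]
  simp

lemma telescope (h : ℕ → ℝ) (jm : ℕ) :
    ∑ k ∈ Finset.Icc 1 jm, (h k - h (k - 1)) = h jm - h 0 := by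
  induction jm with
  | zero => simp
  | succ m ih =>
    rw [Finset.sum_Icc_succ_top (Nat.succ_le_succ (Nat.zero_le m)), ih]
    simp

lemma exists_j (n : ℕ) (ρ : ℕ → ℝ) (t r : ℝ) (cf : ℕ → ℝ → ℝ) (uv : ℝ)
    (hmono : ∀ k l : ℕ, 1 ≤ k → k ≤ l → l ≤ n → cf k t ≤ cf l t)
    (huval : uv = ∑ k ∈ Finset.range (n + 1),
      ρ k * (if (k = 0 ∨ cf k t ≤ r) ∧ (k = n ∨ r < cf (k + 1) t) then (1:ℝ) else 0)) :
    ∃ j : ℕ, j ≤ n ∧ uv = ρ j ∧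
      ∀ h : ℕ → ℝ, (∑ k ∈ Finset.Icc 1 n,
        (h k - h (k - 1)) * (if cf k t ≤ r then (1:ℝ) else 0)) = h j - h 0 := by
  classical
  have hexists : ∃ j, j ≤ n ∧
      ∀ k, (k ∈ (Finset.Icc 1 n).filter (fun k => cf k t ≤ r) ↔ (1 ≤ k ∧ k ≤ j)) := by
    by_cases hne : ((Finset.Icc 1 n).filter (fun k => cf k t ≤ r)).Nonempty
    · set S := (Finset.Icc 1 n).filter (fun k => cf k t ≤ r)
      refine ⟨S.max' hne, ?_, ?_⟩
      · have hjS := S.max'_mem hne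
        exact (Finset.mem_Icc.1 (Finset.mem_filter.1 hjS).1).2
      · intro k
        have hjS := S.max'_mem hne
        have hjn : S.max' hne ≤ n := (Finset.mem_Icc.1 (Finset.mem_filter.1 hjS).1).2
        have hjcf : cf (S.max' hne) t ≤ r := (Finset.mem_filter.1 hjS).2
        constructor
        · intro hk
          exact ⟨(Finset.mem_Icc.1 (Finset.mem_filter.1 hk).1).1, S.le_max' k hk⟩
        · rintro ⟨h1, h2⟩
          refine Finset.mem_filter.2 ⟨Finset.mem_Icc.2 ⟨h1, le_trans h2 hjn⟩, ?_⟩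
          exact le_trans (hmono k _ h1 h2 hjn) hjcf
    · refine ⟨0, Nat.zero_le n, fun k => ?_⟩
      constructor
      · intro hk; exact absurd ⟨k, hk⟩ hne
      · rintro ⟨h1, h2⟩; omega
  obtain ⟨j, hjn, hmem⟩ := hexists
  have hmem' : ∀ k, (1 ≤ k ∧ k ≤ n ∧ cf k t ≤ r) ↔ (1 ≤ k ∧ k ≤ j) := by
    intro k
    rw [← hmem k, Finset.mem_filter, Finset.mem_Icc, and_assoc]
  refine ⟨j, hjn, ?_, ?_⟩
  · rw [huval]
    have hcond : ∀ k ∈ Finset.range (n+1),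
        (ρ k * (if (k = 0 ∨ cf k t ≤ r) ∧ (k = n ∨ r < cf (k+1) t) then (1:ℝ) else 0))
        = if k = j then ρ k else 0 := by
      intro k hk
      rw [Finset.mem_range] at hk
      by_cases hkj : k = j
      · have hpc : (k = 0 ∨ cf k t ≤ r) ∧ (k = n ∨ r < cf (k+1) t) := by
          subst hkj
          constructor
          · rcases Nat.eq_zero_or_pos k with h0 | hpos
            · exact Or.inl h0
            · exact Or.inr (((hmem' k).2 ⟨hpos, le_rfl⟩)).2.2
          · rcases eq_or_lt_of_le (Nat.lt_succ_iff.1 hk) with hn' | hlt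
            · exact Or.inl hn'
            · refine Or.inr ?_
              by_contra hnot
              push_neg at hnot
              have := (hmem' (k+1)).1 ⟨by omega, by omega, hnot⟩
              omega
        rw [if_pos hpc, if_pos hkj, hkj, mul_one]
      · have hnc : ¬((k = 0 ∨ cf k t ≤ r) ∧ (k = n ∨ r < cf (k+1) t)) := by
          rintro ⟨hcl, hcr⟩
          apply hkj
          have hkle : k ≤ j := by
            rcases hcl with h0 | hcf'
            · omega
            · rcases Nat.eq_zero_or_pos k with h0 | hpos
              · omega
              · exact ((hmem' k).1 ⟨hpos, by omega, hcf'⟩).2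
          have hjle : j ≤ k := by
            rcases hcr with hn' | hlt
            · omega
            · by_contra hlt2
              push_neg at hlt2
              have h2 := (hmem' (k+1)).2 ⟨by omega, by omega⟩
              exact absurd hlt (not_lt.2 h2.2.2)
          omega
        rw [if_neg hnc, if_neg hkj, mul_zero]
    rw [Finset.sum_congr rfl hcond, Finset.sum_ite_eq' (Finset.range (n+1)) j ρ]
    rw [if_pos (Finset.mem_range.2 (by omega))]
  · intro h
    have hev : ∀ k ∈ Finset.Icc 1 n,
        (h k - h (k-1)) * (if cf k t ≤ r then (1:ℝ) else 0)
        = if cf k t ≤ r then (h k - h (k-1)) else 0 := by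
      intro k _
      by_cases hcf' : cf k t ≤ r <;> simp [hcf']
    have hSeq : (Finset.Icc 1 n).filter (fun k => cf k t ≤ r) = Finset.Icc 1 j :=
      Finset.ext fun k => by rw [hmem k, Finset.mem_Icc]
    rw [Finset.sum_congr rfl hev, ← Finset.sum_filter, hSeq, telescope]

lemma mono_of_step (ρ : ℕ → ℝ) (n : ℕ) (hstep : ∀ k, k < n → ρ k < ρ (k+1)) :
    ∀ j, j ≤ n → ∀ i, i ≤ j → ρ i ≤ ρ j := by
  intro j
  induction j with
  | zero => intro _ i hi; simp [Nat.le_zero.1 hi]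
  | succ m ih =>
    intro hjn i hi
    rcases Nat.lt_or_ge i (m+1) with h | h
    · exact le_trans (ih (by omega) i (by omega)) (le_of_lt (hstep m (by omega)))
    · have : i = m + 1 := by omega
      rw [this]

set_option maxHeartbeats 2000000 in
/-- The piecewise-constant multi-shock profile is a weak solution
of Burgers' equation across the collision time. With shock curves
`c_k(t) = c_k + (1-ρ_{k-1}-ρ_k) t` for `t < t*` and
`c_k(t) = r* + (1-ρ_0-ρ_n)(t-t*)` for `t ≥ t*` (and `c_0(t) = -∞`,
`c_{n+1}(t) = +∞`), the function `u(r,t) = Σ_{k=0}^n ρ_k 1{c_k(t) ≤ r < c_{k+1}(t)}`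
satisfies `∫_0^∞ ∫_ℝ [u ∂_t φ + u(1-u) ∂_r φ] dr dt = 0` for every smooth `φ`
with compact support contained in `ℝ × (0,∞)`. -/
theorem stmt_12 (n : ℕ) (hn : 1 ≤ n) (ρ : ℕ → ℝ) (tstar rstar : ℝ)
    (hρ0 : 0 ≤ ρ 0) (hρmono : ∀ k, k < n → ρ k < ρ (k + 1)) (hρn : ρ n ≤ 1)
    (htstar : 0 < tstar)
    (c : ℕ → ℝ)
    (hc : ∀ k, 1 ≤ k → k ≤ n → c k = rstar - (1 - ρ (k - 1) - ρ k) * tstar)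
    (cf : ℕ → ℝ → ℝ)
    (hcf : ∀ k, 1 ≤ k → k ≤ n → ∀ t : ℝ,
      cf k t = if t < tstar then c k + (1 - ρ (k - 1) - ρ k) * t
        else rstar + (1 - ρ 0 - ρ n) * (t - tstar))
    (u : ℝ → ℝ → ℝ)
    (hu : ∀ r t, u r t = ∑ k ∈ Finset.range (n + 1),
      ρ k * (if (k = 0 ∨ cf k t ≤ r) ∧ (k = n ∨ r < cf (k + 1) t) then 1 else 0)) :
    ∀ φ : ℝ × ℝ → ℝ, ContDiff ℝ (⊤ : ℕ∞) φ → HasCompactSupport φ →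
      tsupport φ ⊆ {p : ℝ × ℝ | 0 < p.2} →
      (∫ t in Set.Ioi (0 : ℝ), ∫ r : ℝ,
        (u r t * fderiv ℝ φ (r, t) (0, 1)
          + (u r t * (1 - u r t)) * fderiv ℝ φ (r, t) (1, 0))) = 0 := by
  intro φ hφ hφc hφsupp
  -- basic continuity/support facts
  have hDt : Continuous (fun p : ℝ × ℝ => fderiv ℝ φ p (0, 1)) := cont_fderiv_apply hφ _
  have hDr : Continuous (fun p : ℝ × ℝ => fderiv ℝ φ p (1, 0)) := cont_fderiv_apply hφ _
  have hDtc : HasCompactSupport (fun p : ℝ × ℝ => fderiv ℝ φ p (0, 1)) := cs_fderiv_apply hφc _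
  have hDrc : HasCompactSupport (fun p : ℝ × ℝ => fderiv ℝ φ p (1, 0)) := cs_fderiv_apply hφc _
  have hFkcont : ∀ a b : ℝ, Continuous
      (fun p : ℝ × ℝ => a * fderiv ℝ φ p (0, 1) + b * fderiv ℝ φ p (1, 0)) :=
    fun a b => (continuous_const.mul hDt).add (continuous_const.mul hDr)
  have hFkcs : ∀ a b : ℝ, HasCompactSupport
      (fun p : ℝ × ℝ => a * fderiv ℝ φ p (0, 1) + b * fderiv ℝ φ p (1, 0)) :=
    fun a b => (hDtc.mul_left).add (hDrc.mul_left)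
  have hFsect : ∀ (a b t : ℝ), Integrable
      (fun r => a * fderiv ℝ φ (r, t) (0, 1) + b * fderiv ℝ φ (r, t) (1, 0)) :=
    fun a b t => ((hFkcont a b).comp
      (continuous_id.prodMk continuous_const)).integrable_of_hasCompactSupport
      (sect_cs (hFkcs a b) t)
  -- monotonicity
  have hρm : ∀ i j : ℕ, i ≤ j → j ≤ n → ρ i ≤ ρ j :=
    fun i j hij hjn => mono_of_step ρ n hρmono j hjn i hij
  have hcfm : ∀ (t : ℝ) (k l : ℕ), 1 ≤ k → k ≤ l → l ≤ n → cf k t ≤ cf l t := by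
    intro t k l h1 hkl hln
    rw [hcf k h1 (le_trans hkl hln) t, hcf l (by omega) hln t]
    by_cases ht : t < tstar
    · rw [if_pos ht, if_pos ht, hc k h1 (le_trans hkl hln), hc l (by omega) hln]
      have hk1 : ρ (k - 1) ≤ ρ (l - 1) := hρm _ _ (by omega) (by omega)
      have hk2 : ρ k ≤ ρ l := hρm _ _ hkl hln
      nlinarith [mul_nonneg (by linarith : (0:ℝ) ≤ (1 - ρ (k-1) - ρ k) - (1 - ρ (l-1) - ρ l))
        (by linarith : (0:ℝ) ≤ tstar - t)]
    · rw [if_neg ht, if_neg ht]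
  -- pointwise identity
  have hpt : ∀ t r : ℝ,
      u r t * fderiv ℝ φ (r, t) (0, 1)
        + (u r t * (1 - u r t)) * fderiv ℝ φ (r, t) (1, 0)
      = (ρ 0 * fderiv ℝ φ (r, t) (0, 1)
          + (ρ 0 * (1 - ρ 0)) * fderiv ℝ φ (r, t) (1, 0))
        + ∑ k ∈ Finset.Icc 1 n, Set.indicator (Ici (cf k t))
            (fun r' => (ρ k - ρ (k - 1)) * fderiv ℝ φ (r', t) (0, 1)
              + (ρ k * (1 - ρ k) - ρ (k - 1) * (1 - ρ (k - 1))) * fderiv ℝ φ (r', t) (1, 0)) r := by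
    intro t r
    obtain ⟨j, hjn, hjval, hsum⟩ := exists_j n ρ t r cf (u r t) (hcfm t) (hu r t)
    have h1 : (∑ k ∈ Finset.Icc 1 n,
        (ρ k - ρ (k - 1)) * (if cf k t ≤ r then (1:ℝ) else 0)) = ρ j - ρ 0 := hsum ρ
    have h2 : (∑ k ∈ Finset.Icc 1 n,
        (ρ k * (1 - ρ k) - ρ (k - 1) * (1 - ρ (k - 1))) * (if cf k t ≤ r then (1:ℝ) else 0))
        = ρ j * (1 - ρ j) - ρ 0 * (1 - ρ 0) := hsum (fun k => ρ k * (1 - ρ k))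
    have hindeq : ∀ k ∈ Finset.Icc 1 n, Set.indicator (Ici (cf k t))
        (fun r' => (ρ k - ρ (k - 1)) * fderiv ℝ φ (r', t) (0, 1)
          + (ρ k * (1 - ρ k) - ρ (k - 1) * (1 - ρ (k - 1))) * fderiv ℝ φ (r', t) (1, 0)) r
        = ((ρ k - ρ (k - 1)) * (if cf k t ≤ r then (1:ℝ) else 0)) * fderiv ℝ φ (r, t) (0, 1)
          + ((ρ k * (1 - ρ k) - ρ (k - 1) * (1 - ρ (k - 1)))
              * (if cf k t ≤ r then (1:ℝ) else 0)) * fderiv ℝ φ (r, t) (1, 0) := by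
      intro k _
      by_cases hc' : cf k t ≤ r
      · rw [Set.indicator_of_mem (mem_Ici.2 hc'), if_pos hc']; ring
      · rw [Set.indicator_of_notMem (fun hh => hc' (mem_Ici.1 hh)), if_neg hc']; ring
    rw [Finset.sum_congr rfl hindeq, Finset.sum_add_distrib, ← Finset.sum_mul, ← Finset.sum_mul,
      h1, h2, hjval]
    ring
  -- inner integral decomposition
  have hinner : ∀ t : ℝ,
      (∫ r : ℝ, (u r t * fderiv ℝ φ (r, t) (0, 1)
        + (u r t * (1 - u r t)) * fderiv ℝ φ (r, t) (1, 0)))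
      = (∫ r : ℝ, (ρ 0 * fderiv ℝ φ (r, t) (0, 1)
          + (ρ 0 * (1 - ρ 0)) * fderiv ℝ φ (r, t) (1, 0)))
        + ∑ k ∈ Finset.Icc 1 n, ∫ r in Ici (cf k t),
            ((ρ k - ρ (k - 1)) * fderiv ℝ φ (r, t) (0, 1)
              + (ρ k * (1 - ρ k) - ρ (k - 1) * (1 - ρ (k - 1))) * fderiv ℝ φ (r, t) (1, 0)) := by
    intro t
    rw [show (fun r => u r t * fderiv ℝ φ (r, t) (0, 1)
        + (u r t * (1 - u r t)) * fderiv ℝ φ (r, t) (1, 0))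
      = (fun r => (ρ 0 * fderiv ℝ φ (r, t) (0, 1)
          + (ρ 0 * (1 - ρ 0)) * fderiv ℝ φ (r, t) (1, 0))
        + ∑ k ∈ Finset.Icc 1 n, Set.indicator (Ici (cf k t))
            (fun r' => (ρ k - ρ (k - 1)) * fderiv ℝ φ (r', t) (0, 1)
              + (ρ k * (1 - ρ k) - ρ (k - 1) * (1 - ρ (k - 1))) * fderiv ℝ φ (r', t) (1, 0)) r)
      from funext (hpt t)]
    rw [integral_add (hFsect (ρ 0) (ρ 0 * (1 - ρ 0)) t)
      (integrable_finset_sum _ (fun k _ => ((hFsect _ _ t).indicator measurableSet_Ici)))]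
    congr 1
    rw [integral_finset_sum _ (fun k _ => ((hFsect _ _ t).indicator measurableSet_Ici))]
    exact Finset.sum_congr rfl fun k _ => integral_indicator measurableSet_Ici
  -- continuity of the shock curves
  have hcfcont : ∀ k, 1 ≤ k → k ≤ n → Continuous (cf k) := by
    intro k h1 h2
    have heq : cf k = fun t => if t ≤ tstar then c k + (1 - ρ (k - 1) - ρ k) * t
        else rstar + (1 - ρ 0 - ρ n) * (t - tstar) := by
      funext t
      rw [hcf k h1 h2 t]
      rcases lt_trichotomy t tstar with h | h | h
      · rw [if_pos h, if_pos h.le]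
      · subst h
        rw [if_neg (lt_irrefl _), if_pos le_rfl, hc k h1 h2]
        ring
      · rw [if_neg (not_lt.2 h.le), if_neg (not_le.2 h)]
    rw [heq]
    apply Continuous.if_le
    · exact continuous_const.add (continuous_const.mul continuous_id)
    · exact continuous_const.add (continuous_const.mul (continuous_id.sub continuous_const))
    · exact continuous_id
    · exact continuous_const
    · intro t ht
      rw [ht, hc k h1 h2]
      ring
  -- integrability in time of each shock term
  have hIkint : ∀ k, 1 ≤ k → k ≤ n → Integrable (fun t => ∫ r in Ici (cf k t),
      ((ρ k - ρ (k - 1)) * fderiv ℝ φ (r, t) (0, 1)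
        + (ρ k * (1 - ρ k) - ρ (k - 1) * (1 - ρ (k - 1))) * fderiv ℝ φ (r, t) (1, 0))) := by
    intro k h1 h2
    have heq : (fun t => ∫ r in Ici (cf k t),
        ((ρ k - ρ (k - 1)) * fderiv ℝ φ (r, t) (0, 1)
          + (ρ k * (1 - ρ k) - ρ (k - 1) * (1 - ρ (k - 1))) * fderiv ℝ φ (r, t) (1, 0)))
        = (fun t => ∫ s in Ici (0:ℝ),
        ((ρ k - ρ (k - 1)) * fderiv ℝ φ (s + cf k t, t) (0, 1)
          + (ρ k * (1 - ρ k) - ρ (k - 1) * (1 - ρ (k - 1))) * fderiv ℝ φ (s + cf k t, t) (1, 0))) := by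
      funext t
      exact cov_Ici _ (cf k t)
    rw [heq]
    exact ((cont_param_moving (hFkcont _ _) (hFkcs _ _) (hcfcont k h1 h2) (Ici 0)).integrable_of_hasCompactSupport
      (cs_param_moving (hFkcont _ _) (hFkcs _ _) (hcfcont k h1 h2) (Ici 0)))
  have hbaseint : Integrable (fun t => ∫ r : ℝ, (ρ 0 * fderiv ℝ φ (r, t) (0, 1)
      + (ρ 0 * (1 - ρ 0)) * fderiv ℝ φ (r, t) (1, 0))) :=
    (cont_full_param (hFkcont _ _) (hFkcs _ _)).integrable_of_hasCompactSupport
      (cs_full_param (hFkcont _ _) (hFkcs _ _))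
  -- split the outer integral
  rw [show (fun t => ∫ r : ℝ, (u r t * fderiv ℝ φ (r, t) (0, 1)
      + (u r t * (1 - u r t)) * fderiv ℝ φ (r, t) (1, 0)))
    = (fun t => (∫ r : ℝ, (ρ 0 * fderiv ℝ φ (r, t) (0, 1)
        + (ρ 0 * (1 - ρ 0)) * fderiv ℝ φ (r, t) (1, 0)))
      + ∑ k ∈ Finset.Icc 1 n, ∫ r in Ici (cf k t),
          ((ρ k - ρ (k - 1)) * fderiv ℝ φ (r, t) (0, 1)
            + (ρ k * (1 - ρ k) - ρ (k - 1) * (1 - ρ (k - 1))) * fderiv ℝ φ (r, t) (1, 0)))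
    from funext hinner]
  rw [integral_add hbaseint.integrableOn
    (integrable_finset_sum _ (fun k hk => hIkint k (Finset.mem_Icc.1 hk).1 (Finset.mem_Icc.1 hk).2)).integrableOn]
  rw [integral_finset_sum _ (fun k hk =>
    (hIkint k (Finset.mem_Icc.1 hk).1 (Finset.mem_Icc.1 hk).2).integrableOn)]
  -- base term vanishes
  have hDtsect : ∀ t : ℝ, Integrable (fun r => fderiv ℝ φ (r, t) (0, 1)) :=
    fun t => ((hDt.comp (continuous_id.prodMk continuous_const)).integrable_of_hasCompactSupport
      (sect_cs hDtc t))
  have hDrsect : ∀ t : ℝ, Integrable (fun r => fderiv ℝ φ (r, t) (1, 0)) :=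
    fun t => ((hDr.comp (continuous_id.prodMk continuous_const)).integrable_of_hasCompactSupport
      (sect_cs hDrc t))
  have hbase0 : (∫ t in Ioi (0:ℝ), ∫ r : ℝ, (ρ 0 * fderiv ℝ φ (r, t) (0, 1)
      + (ρ 0 * (1 - ρ 0)) * fderiv ℝ φ (r, t) (1, 0))) = 0 := by
    have hsplit : ∀ t : ℝ, (∫ r : ℝ, (ρ 0 * fderiv ℝ φ (r, t) (0, 1)
        + (ρ 0 * (1 - ρ 0)) * fderiv ℝ φ (r, t) (1, 0)))
        = ρ 0 * ∫ r : ℝ, fderiv ℝ φ (r, t) (0, 1) := by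
      intro t
      rw [integral_add ((hDtsect t).const_mul _) ((hDrsect t).const_mul _),
        integral_const_mul, integral_const_mul, ftc_fst_full hφ hφc t]
      ring
    rw [show (fun t => ∫ r : ℝ, (ρ 0 * fderiv ℝ φ (r, t) (0, 1)
        + (ρ 0 * (1 - ρ 0)) * fderiv ℝ φ (r, t) (1, 0)))
      = (fun t => ρ 0 * ∫ r : ℝ, fderiv ℝ φ (r, t) (0, 1)) from funext hsplit]
    rw [integral_const_mul, outer_full hφ hφc hφsupp, mul_zero]
  rw [hbase0]
  -- per-shock evaluation
  have hcf_left : ∀ k, 1 ≤ k → k ≤ n → ∀ t : ℝ, t ≤ tstar →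
      cf k t = c k + (1 - ρ (k - 1) - ρ k) * t := by
    intro k h1 h2 t ht
    rw [hcf k h1 h2 t]
    rcases lt_or_eq_of_le ht with h | h
    · rw [if_pos h]
    · subst h
      rw [if_neg (lt_irrefl _), hc k h1 h2]
      ring
  have hcf_right : ∀ k, 1 ≤ k → k ≤ n → ∀ t : ℝ, tstar ≤ t →
      cf k t = (rstar - (1 - ρ 0 - ρ n) * tstar) + (1 - ρ 0 - ρ n) * t := by
    intro k h1 h2 t ht
    rw [hcf k h1 h2 t, if_neg (not_lt.2 ht)]
    ring
  have hkval : ∀ k ∈ Finset.Icc 1 n,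
      (∫ t in Ioi (0:ℝ), ∫ r in Ici (cf k t),
        ((ρ k - ρ (k - 1)) * fderiv ℝ φ (r, t) (0, 1)
          + (ρ k * (1 - ρ k) - ρ (k - 1) * (1 - ρ (k - 1))) * fderiv ℝ φ (r, t) (1, 0)))
      = ((ρ k - ρ (k - 1)) * (1 - ρ 0 - ρ n)
          - (ρ k * (1 - ρ k) - ρ (k - 1) * (1 - ρ (k - 1))))
        * ∫ t in Ioi tstar, φ (shiftMap (rstar - (1 - ρ 0 - ρ n) * tstar) (1 - ρ 0 - ρ n) (0, t)) := by
    intro k hk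
    obtain ⟨h1, h2⟩ := Finset.mem_Icc.1 hk
    rw [← Ioc_union_Ioi_eq_Ioi htstar.le,
      setIntegral_union (Set.Ioc_disjoint_Ioi le_rfl) measurableSet_Ioi
        (hIkint k h1 h2).integrableOn (hIkint k h1 h2).integrableOn]
    have hp1 : (∫ t in Ioc (0:ℝ) tstar, ∫ r in Ici (cf k t),
        ((ρ k - ρ (k - 1)) * fderiv ℝ φ (r, t) (0, 1)
          + (ρ k * (1 - ρ k) - ρ (k - 1) * (1 - ρ (k - 1))) * fderiv ℝ φ (r, t) (1, 0)))
        = ∫ t in Ioc (0:ℝ) tstar, ∫ r in Ici (c k + (1 - ρ (k - 1) - ρ k) * t),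
        ((ρ k - ρ (k - 1)) * fderiv ℝ φ (r, t) (0, 1)
          + (ρ k * (1 - ρ k) - ρ (k - 1) * (1 - ρ (k - 1))) * fderiv ℝ φ (r, t) (1, 0)) :=
      setIntegral_congr_fun measurableSet_Ioc
        (fun t ht => by rw [hcf_left k h1 h2 t ht.2])
    have hp2 : (∫ t in Ioi tstar, ∫ r in Ici (cf k t),
        ((ρ k - ρ (k - 1)) * fderiv ℝ φ (r, t) (0, 1)
          + (ρ k * (1 - ρ k) - ρ (k - 1) * (1 - ρ (k - 1))) * fderiv ℝ φ (r, t) (1, 0)))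
        = ∫ t in Ioi tstar, ∫ r in Ici ((rstar - (1 - ρ 0 - ρ n) * tstar) + (1 - ρ 0 - ρ n) * t),
        ((ρ k - ρ (k - 1)) * fderiv ℝ φ (r, t) (0, 1)
          + (ρ k * (1 - ρ k) - ρ (k - 1) * (1 - ρ (k - 1))) * fderiv ℝ φ (r, t) (1, 0)) :=
      setIntegral_congr_fun measurableSet_Ioi
        (fun t ht => by rw [hcf_right k h1 h2 t (le_of_lt ht)])
    rw [hp1, hp2,
      seg_Ioc hφ hφc (c k) (1 - ρ (k - 1) - ρ k) (ρ k - ρ (k - 1))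
        (ρ k * (1 - ρ k) - ρ (k - 1) * (1 - ρ (k - 1))) 0 tstar htstar.le,
      seg_Ioi hφ hφc (rstar - (1 - ρ 0 - ρ n) * tstar) (1 - ρ 0 - ρ n) (ρ k - ρ (k - 1))
        (ρ k * (1 - ρ k) - ρ (k - 1) * (1 - ρ (k - 1))) tstar]
    have hb0 : ρ k * (1 - ρ k) - ρ (k - 1) * (1 - ρ (k - 1))
        - (ρ k - ρ (k - 1)) * (1 - ρ (k - 1) - ρ k) = 0 := by ring
    have hzero : (∫ s in Ici (0:ℝ), φ (shiftMap (c k) (1 - ρ (k - 1) - ρ k) (s, 0))) = 0 := by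
      have hz : ∀ s : ℝ, φ (shiftMap (c k) (1 - ρ (k - 1) - ρ k) (s, 0)) = 0 := fun s =>
        image_eq_zero_of_notMem_tsupport (fun hm => by simpa [shiftMap] using hφsupp hm)
      rw [show (fun s : ℝ => φ (shiftMap (c k) (1 - ρ (k - 1) - ρ k) (s, 0))) = fun _ => (0:ℝ)
        from funext hz]
      simp
    have hP1 : (∫ s in Ici (0:ℝ), φ (shiftMap (c k) (1 - ρ (k - 1) - ρ k) (s, tstar)))
        = ∫ s in Ici (0:ℝ), φ (s + rstar, tstar) :=
      setIntegral_congr_fun measurableSet_Ici (fun s _ => by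
        rw [show shiftMap (c k) (1 - ρ (k - 1) - ρ k) (s, tstar) = (s + rstar, tstar) from by
          simp only [shiftMap, Prod.mk.injEq]
          exact ⟨by rw [hc k h1 h2]; ring, trivial⟩])
    have hP2 : (∫ s in Ici (0:ℝ),
        φ (shiftMap (rstar - (1 - ρ 0 - ρ n) * tstar) (1 - ρ 0 - ρ n) (s, tstar)))
        = ∫ s in Ici (0:ℝ), φ (s + rstar, tstar) :=
      setIntegral_congr_fun measurableSet_Ici (fun s _ => by
        rw [show shiftMap (rstar - (1 - ρ 0 - ρ n) * tstar) (1 - ρ 0 - ρ n) (s, tstar)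
            = (s + rstar, tstar) from by
          simp only [shiftMap, Prod.mk.injEq]
          exact ⟨by ring, trivial⟩])
    rw [hzero, hP1, hP2, hb0]
    ring
  rw [Finset.sum_congr rfl hkval, ← Finset.sum_mul]
  have hsum0 : (∑ k ∈ Finset.Icc 1 n, ((ρ k - ρ (k - 1)) * (1 - ρ 0 - ρ n)
      - (ρ k * (1 - ρ k) - ρ (k - 1) * (1 - ρ (k - 1))))) = 0 := by
    have h1 : (∑ k ∈ Finset.Icc 1 n, ((ρ k - ρ (k - 1)) * (1 - ρ 0 - ρ n)
        - (ρ k * (1 - ρ k) - ρ (k - 1) * (1 - ρ (k - 1)))))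
        = (∑ k ∈ Finset.Icc 1 n,
            ((fun k => ρ k * (1 - ρ 0 - ρ n) - ρ k * (1 - ρ k)) k
              - (fun k => ρ k * (1 - ρ 0 - ρ n) - ρ k * (1 - ρ k)) (k - 1))) := by
      apply Finset.sum_congr rfl
      intro k _
      beta_reduce
      ring
    rw [h1, telescope (fun k => ρ k * (1 - ρ 0 - ρ n) - ρ k * (1 - ρ k)) n]
    beta_reduce
    ring
  rw [hsum0, zero_mul, add_zero]
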